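/- With the notation of the pendant-clique operation, the following polynomial identity holds: P_{G(r+1,s−1)}(x) − P_{G(r,s)}(x) = (x+1)^{r+s−4}·[(s−r−1)·(P_G(x) + P_{G−u}(x) + P_{G−v}(x) + P_{G−{u,v}}(x)) + (x+1)·(P_{G−v}(x) − P_{G−u}(x))], for all r, s ≥ 2. -/

import Mathlib

/-!
Order the vertices of `G(n+1, m+1)` as `V`, then the two new clique vertex sets. With
`t = x + 1`, the clique blocks of `xI - A` are `tI - J`, and each clique is joined to `G` only
through `u` (resp. `v`), by a rank-one block. Over the fraction field, `tI - J` acts on the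
all-ones vector as the scalar `t - n`, so the Schur complement of the clique blocks is
`xI - A(G) - n/(t-n) E_uu - m/(t-m) E_vv`. Expanding its determinant in these two diagonal
entries, and using `det (tI - J_n) = t^(n-1) (t - n)`, expresses `(x+1)^2 P_{G(n+1,m+1)}` through
`P_G`, `P_{G-u}`, `P_{G-v}` and `P_{G-{u,v}}`; the identity is the difference of two instances
of this formula.
-/

open scoped Classical
open Polynomial

noncomputable section

/-- Adjacency matrix of a simple graph, over `ℝ`. -/
def adjM {V : Type*} [Fintype V] (G : SimpleGraph V) : Matrix V V ℝ :=
  fun a b => if G.Adj a b then 1 else 0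

/-- Characteristic polynomial `det (x•I - A(G))` of the adjacency matrix. -/
def charP {V : Type*} [Fintype V] [DecidableEq V] (G : SimpleGraph V) : Polynomial ℝ :=
  (adjM G).charpoly

/-- Spectral radius: the largest real eigenvalue of the (symmetric, nonnegative)
adjacency matrix, i.e. the largest real root of the characteristic polynomial. -/
def specRad {V : Type*} [Fintype V] [DecidableEq V] (G : SimpleGraph V) : ℝ :=
  sSup {x : ℝ | (charP G).IsRoot x}

/-- Vertex-deleted subgraph `G - v`. -/
def del {V : Type*} (G : SimpleGraph V) (v : V) : SimpleGraph {u : V // u ≠ v} :=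
  SimpleGraph.induce {u : V | u ≠ v} G

/-- `pcl G u v r s` is `G(r,s)`: the graph obtained from `G` by attaching a pendant
complete graph `K_r` at `u` (identifying `u` with one of its vertices, so adding
`r-1` new vertices) and a pendant `K_s` at `v`. -/
def pcl {V : Type*} (G : SimpleGraph V) (u v : V) (r s : ℕ) :
    SimpleGraph (V ⊕ (Fin (r - 1) ⊕ Fin (s - 1))) where
  Adj x y :=
    match x, y with
    | Sum.inl a, Sum.inl b => G.Adj a b
    | Sum.inl a, Sum.inr (Sum.inl _) => a = u
    | Sum.inl a, Sum.inr (Sum.inr _) => a = v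
    | Sum.inr (Sum.inl _), Sum.inl b => b = u
    | Sum.inr (Sum.inr _), Sum.inl b => b = v
    | Sum.inr (Sum.inl i), Sum.inr (Sum.inl j) => i ≠ j
    | Sum.inr (Sum.inr i), Sum.inr (Sum.inr j) => i ≠ j
    | _, _ => False
  symm := ⟨by
    rintro (a | (i | i)) (b | (j | j)) h <;>
      first
        | exact G.adj_symm h
        | exact h
        | exact Ne.symm h
        | exact h.elim⟩
  loopless := ⟨by
    rintro (a | (i | i)) h
    exacts [G.irrefl h, h rfl, h rfl]⟩

/-- Induced subgraph `G - {u,v}` with both vertices removed. -/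
def del2 {V : Type*} (G : SimpleGraph V) (u v : V) :
    SimpleGraph {a : V | a ≠ u ∧ a ≠ v} :=
  SimpleGraph.induce {a : V | a ≠ u ∧ a ≠ v} G


open Matrix

namespace Matrix

variable {R : Type*} [CommRing R] {n : Type*} [Fintype n] [DecidableEq n]

theorem det_updateRow_single_self (A : Matrix n n R) (i : n) :
    (A.updateRow i (Pi.single i 1)).det
      = (A.submatrix ((↑) : {j // j ≠ i} → n) (↑)).det := by
  have : Unique {j // j = i} := ⟨⟨i, rfl⟩, fun j => Subtype.ext j.2⟩
  rw [twoBlockTriangular_det' _ (· = i)]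
  · simp only [det_unique, toSquareBlockProp, toBlock_apply, (default : {j // j = i}).2,
      updateRow_self, Pi.single_eq_same, one_mul]
    congr 1
    ext j k
    simp [toBlock_apply, updateRow_ne j.2]
  · rintro j rfl k hk
    simp [hk]

theorem det_add_smul_single (A : Matrix n n R) (i : n) (c : R) :
    (A + c • single i i 1).det
      = A.det + c * (A.submatrix ((↑) : {j // j ≠ i} → n) (↑)).det := by
  have hrow : A + c • single i i 1 = A.updateRow i (A i + c • Pi.single i 1) := by
    ext j k
    by_cases hj : j = i
    · subst hj
      simp [single_apply, Pi.single_apply, eq_comm]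
    · simp [updateRow_ne hj, Ne.symm hj]
  rw [hrow, det_updateRow_add, updateRow_eq_self, det_updateRow_smul, det_updateRow_single_self]

theorem det_add_smul_single_add_smul_single (A : Matrix n n R) {i j : n} (hij : i ≠ j)
    (c d : R) :
    (A + c • single i i 1 + d • single j j 1).det
      = A.det + c * (A.submatrix ((↑) : {k // k ≠ i} → n) (↑)).det
          + d * (A.submatrix ((↑) : {k // k ≠ j} → n) (↑)).det
          + c * d * (A.submatrix ((↑) : {k // k ≠ i ∧ k ≠ j} → n) (↑)).det := by
  let j' : {k // k ≠ i} := ⟨j, hij.symm⟩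
  have hsub : (A + d • single j j 1).submatrix ((↑) : {k // k ≠ i} → n) (↑)
      = A.submatrix (↑) (↑) + d • single j' j' 1 := by
    ext k l
    simp [single_apply, j', Subtype.ext_iff]
  let e : {k : {k // k ≠ i} // k ≠ j'} ≃ {k // k ≠ i ∧ k ≠ j} :=
    { toFun := fun k => ⟨k.1.1, k.1.2, fun h => k.2 (Subtype.ext h)⟩
      invFun := fun k => ⟨⟨k.1, k.2.1⟩, fun h => k.2.2 (congrArg Subtype.val h)⟩ }
  have hsubsub : ((A.submatrix (Subtype.val : {k // k ≠ i} → n) Subtype.val).submatrix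
      (Subtype.val : {k // k ≠ j'} → {k // k ≠ i}) Subtype.val).det
        = (A.submatrix ((↑) : {k // k ≠ i ∧ k ≠ j} → n) (↑)).det :=
    det_submatrix_equiv_self e (A.submatrix (↑) (↑))
  rw [add_right_comm, det_add_smul_single, hsub, det_add_smul_single, det_add_smul_single,
    hsubsub]
  ring

theorem det_smul_one_sub_vecMulVec (t : R) (x y : n → R) :
    (t • 1 - vecMulVec x y).det
      = t ^ Fintype.card n - (x ⬝ᵥ y) * t ^ (Fintype.card n - 1) := by
  rw [smul_one_eq_diagonal, ← scalar_apply, ← eval_charpoly, charpoly_vecMulVec]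
  simp [smul_eq_C_mul]

theorem mul_det_smul_one_sub_vecMulVec_one (t : R) :
    t * (t • 1 - vecMulVec (1 : n → R) 1).det = t ^ Fintype.card n * (t - Fintype.card n) := by
  rw [det_smul_one_sub_vecMulVec, one_dotProduct_one]
  rcases Nat.eq_zero_or_eq_succ_pred (Fintype.card n) with h | h <;> rw [h]
  · simp
  · simp only [Nat.succ_sub_one, pow_succ]
    push_cast
    ring

theorem smul_one_sub_vecMulVec_one_mul_vecMulVec {m : Type*} (t : R) (y : m → R) :
    (t • 1 - vecMulVec 1 1 : Matrix n n R) * vecMulVec (1 : n → R) y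
      = (t - Fintype.card n) • vecMulVec 1 y := by
  rw [Matrix.sub_mul, Matrix.smul_mul, Matrix.one_mul, vecMulVec_mul_vecMulVec,
    one_dotProduct_one, sub_smul, vecMulVec_smul]

theorem charmatrix_submatrix {m : Type*} [Fintype m] [DecidableEq m] (M : Matrix n n R)
    {e : m → n} (he : Function.Injective e) :
    (M.submatrix e e).charmatrix = M.charmatrix.submatrix e e := by
  ext i j
  by_cases h : i = j
  · simp [h]
  · simp [charmatrix_apply_ne _ _ _ h, charmatrix_apply_ne _ _ _ (he.ne h)]

end Matrix

theorem Polynomial.X_add_one_sub_natCast_ne_zero {R : Type*} [Ring R] [Nontrivial R] (n : ℕ) :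
    X + 1 - (n : R[X]) ≠ 0 := by
  simpa [sub_eq_add_neg, add_assoc] using X_add_C_ne_zero (1 - n : R)

section PendantCliques

variable {R : Type*} [CommRing R] {V : Type*} [DecidableEq V]
  (ι κ : Type*) [DecidableEq ι] [DecidableEq κ]

/-- With `A = xI - A(G)` and `t = x + 1`, this is `xI - A(G(|ι|+1, |κ|+1))`. -/
def pendantCliqueMatrix (A : Matrix V V R) (u v : V) (t : R) :
    Matrix (V ⊕ (ι ⊕ κ)) (V ⊕ (ι ⊕ κ)) R :=
  fromBlocks A (-fromCols (vecMulVec (Pi.single u 1) 1) (vecMulVec (Pi.single v 1) 1))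
    (-fromRows (vecMulVec 1 (Pi.single u 1)) (vecMulVec 1 (Pi.single v 1)))
    (fromBlocks (t • 1 - vecMulVec 1 1) 0 0 (t • 1 - vecMulVec 1 1))

theorem pendantCliqueMatrix_map {S : Type*} [CommRing S] (f : R →+* S)
    (A : Matrix V V R) (u v : V) (t : R) :
    (pendantCliqueMatrix ι κ A u v t).map f = pendantCliqueMatrix ι κ (A.map f) u v (f t) := by
  ext (a | i | i) (b | j | j) <;>
    simp [pendantCliqueMatrix, Pi.single_apply, one_apply, apply_ite f]

variable {ι κ} [Fintype V] [Fintype ι] [Fintype κ]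

theorem det_pendantCliqueMatrix {K : Type*} [Field K] (A : Matrix V V K) (u v : V) {t : K}
    (ht : t ≠ 0) (hι : t - Fintype.card ι ≠ 0) (hκ : t - Fintype.card κ ≠ 0) :
    (pendantCliqueMatrix ι κ A u v t).det
      = (t • 1 - vecMulVec 1 1 : Matrix ι ι K).det
        * (t • 1 - vecMulVec 1 1 : Matrix κ κ K).det
        * (A - (Fintype.card ι / (t - Fintype.card ι)) • single u u (1 : K)
            - (Fintype.card κ / (t - Fintype.card κ)) • single v v (1 : K)).det := by
  set D := fromBlocks (t • 1 - vecMulVec 1 1 : Matrix ι ι K) 0 0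
    (t • 1 - vecMulVec 1 1 : Matrix κ κ K) with hD
  have hdetD : D.det = (t • 1 - vecMulVec 1 1 : Matrix ι ι K).det
      * (t • 1 - vecMulVec 1 1 : Matrix κ κ K).det :=
    det_fromBlocks_zero₂₁ _ _ _
  have hdetD_ne : D.det ≠ 0 := by
    rw [hdetD]
    refine mul_ne_zero (fun h => ?_) (fun h => ?_)
    · have := mul_det_smul_one_sub_vecMulVec_one (n := ι) t
      rw [h, mul_zero] at this
      exact mul_ne_zero (pow_ne_zero _ ht) hι this.symm
    · have := mul_det_smul_one_sub_vecMulVec_one (n := κ) t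
      rw [h, mul_zero] at this
      exact mul_ne_zero (pow_ne_zero _ ht) hκ this.symm
  have : Invertible D := invertibleOfIsUnitDet _ (isUnit_iff_ne_zero.mpr hdetD_ne)
  set B := fromCols (vecMulVec (Pi.single u (1 : K)) (1 : ι → K))
    (vecMulVec (Pi.single v 1) (1 : κ → K))
  set C := fromRows (vecMulVec (1 : ι → K) (Pi.single u 1))
    (vecMulVec (1 : κ → K) (Pi.single v 1))
  -- `D` acts on the columns of `C` as the scalars `t - |ι|` and `t - |κ|`, so `⅟D * C` is
  -- known without computing `⅟D`.
  have hDC : D * fromRows ((t - Fintype.card ι)⁻¹ • vecMulVec (1 : ι → K) (Pi.single u 1))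
      ((t - Fintype.card κ)⁻¹ • vecMulVec (1 : κ → K) (Pi.single v 1)) = C := by
    rw [fromBlocks_mul_fromRows, Matrix.zero_mul, Matrix.zero_mul, add_zero, zero_add,
      Matrix.mul_smul, Matrix.mul_smul, smul_one_sub_vecMulVec_one_mul_vecMulVec,
      smul_one_sub_vecMulVec_one_mul_vecMulVec, smul_smul, smul_smul, inv_mul_cancel₀ hι,
      inv_mul_cancel₀ hκ, one_smul, one_smul]
  have hBDC : B * ⅟D * C = (Fintype.card ι / (t - Fintype.card ι)) • single u u (1 : K)
        + (Fintype.card κ / (t - Fintype.card κ)) • single v v (1 : K) := by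
    rw [Matrix.mul_assoc, ← hDC, Matrix.invOf_mul_cancel_left, fromCols_mul_fromRows]
    simp only [Matrix.mul_smul, vecMulVec_mul_vecMulVec, one_dotProduct_one, vecMulVec_smul,
      smul_smul, single_eq_single_vecMulVec_single, div_eq_inv_mul]
  rw [pendantCliqueMatrix, ← hD, det_fromBlocks₂₂, hdetD, Matrix.neg_mul, Matrix.neg_mul,
    Matrix.mul_neg, neg_neg, hBDC, sub_add_eq_sub_sub]

theorem mul_det_pendantCliqueMatrix [IsDomain R] (A : Matrix V V R) {u v : V} (huv : u ≠ v)
    {t : R} (ht : t ≠ 0) (hι : t - Fintype.card ι ≠ 0) (hκ : t - Fintype.card κ ≠ 0) :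
    t ^ 2 * (pendantCliqueMatrix ι κ A u v t).det
      = t ^ Fintype.card ι * t ^ Fintype.card κ *
        ((t - Fintype.card ι) * (t - Fintype.card κ) * A.det
          - Fintype.card ι * (t - Fintype.card κ)
            * (A.submatrix ((↑) : {a // a ≠ u} → V) (↑)).det
          - Fintype.card κ * (t - Fintype.card ι)
            * (A.submatrix ((↑) : {a // a ≠ v} → V) (↑)).det
          + Fintype.card ι * Fintype.card κ
            * (A.submatrix ((↑) : {a // a ≠ u ∧ a ≠ v} → V) (↑)).det) := by
  have hf : ∀ {r : R}, r ≠ 0 → algebraMap R (FractionRing R) r ≠ 0 := fun hr =>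
    (map_ne_zero_iff _ (IsFractionRing.injective R (FractionRing R))).mpr hr
  apply IsFractionRing.injective R (FractionRing R)
  have hfι : algebraMap R (FractionRing R) t - Fintype.card ι ≠ 0 := by simpa using hf hι
  have hfκ : algebraMap R (FractionRing R) t - Fintype.card κ ≠ 0 := by simpa using hf hκ
  simp only [map_mul, map_pow, map_sub, map_add, map_natCast, RingHom.map_det,
    RingHom.mapMatrix_apply, pendantCliqueMatrix_map, ← submatrix_map]
  have hexp := det_add_smul_single_add_smul_single (A.map (algebraMap R (FractionRing R))) huv
    (-(Fintype.card ι / (algebraMap R (FractionRing R) t - Fintype.card ι)))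
    (-(Fintype.card κ / (algebraMap R (FractionRing R) t - Fintype.card κ)))
  rw [neg_smul, neg_smul, ← sub_eq_add_neg, ← sub_eq_add_neg] at hexp
  rw [det_pendantCliqueMatrix _ _ _ (hf ht) hfι hfκ, hexp, ← mul_assoc, sq, mul_mul_mul_comm,
    mul_det_smul_one_sub_vecMulVec_one, mul_det_smul_one_sub_vecMulVec_one]
  field_simp
  ring

end PendantCliques

section Graph

variable {V : Type*} [Fintype V] [DecidableEq V] (G : SimpleGraph V)

theorem charP_eq_det : charP G = (adjM G).charmatrix.det := rfl

theorem charP_del (u : V) :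
    charP (del G u) = ((adjM G).charmatrix.submatrix ((↑) : {a // a ≠ u} → V) (↑)).det := by
  rw [← charmatrix_submatrix _ Subtype.val_injective]
  rfl

theorem charP_del2 (u v : V) :
    charP (del2 G u v)
      = ((adjM G).charmatrix.submatrix ((↑) : {a // a ≠ u ∧ a ≠ v} → V) (↑)).det := by
  rw [← charmatrix_submatrix _ Subtype.val_injective]
  rfl

theorem charmatrix_adjM_pcl (u v : V) (n m : ℕ) :
    (adjM (pcl G u v (n + 1) (m + 1))).charmatrix
      = pendantCliqueMatrix (Fin n) (Fin m) (adjM G).charmatrix u v (X + 1) := by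
  ext (a | i | i) (b | j | j) : 1 <;>
    simp [pendantCliqueMatrix, adjM, pcl, charmatrix_apply, diagonal_apply, Pi.single_apply,
      one_apply] <;>
    split_ifs <;> ring

theorem charP_pcl_succ_succ {u v : V} (huv : u ≠ v) (n m : ℕ) :
    (X + 1 : ℝ[X]) ^ 2 * charP (pcl G u v (n + 1) (m + 1))
      = (X + 1) ^ n * (X + 1) ^ m *
        ((X + 1 - (n : ℝ[X])) * (X + 1 - (m : ℝ[X])) * charP G
          - (n : ℝ[X]) * (X + 1 - (m : ℝ[X])) * charP (del G u)
          - (m : ℝ[X]) * (X + 1 - (n : ℝ[X])) * charP (del G v)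
          + (n : ℝ[X]) * (m : ℝ[X]) * charP (del2 G u v)) := by
  have h := mul_det_pendantCliqueMatrix (ι := Fin n) (κ := Fin m) (adjM G).charmatrix huv
    (t := X + 1) (by simpa using X_add_C_ne_zero (1 : ℝ))
    (by simpa using X_add_one_sub_natCast_ne_zero n)
    (by simpa using X_add_one_sub_natCast_ne_zero m)
  simp only [Fintype.card_fin] at h
  rw [charP_del, charP_del, charP_del2, charP_eq_det, charP_eq_det, charmatrix_adjM_pcl, h]

end Graph

/-- The pendant-clique polynomial identity:
`P_{G(r+1,s-1)} - P_{G(r,s)} = (x+1)^(r+s-4) * ((s-r-1)(P_G + P_{G-u} + P_{G-v} + P_{G-{u,v}}) + (x+1)(P_{G-v} - P_{G-u}))`. -/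
theorem pendant_clique_identity {V : Type*} [Fintype V] [DecidableEq V]
    (G : SimpleGraph V) (u v : V) (huv : u ≠ v) (r s : ℕ)
    (hr : 2 ≤ r) (hs : 2 ≤ s) :
    charP (pcl G u v (r + 1) (s - 1)) - charP (pcl G u v r s) =
      (X + 1) ^ (r + s - 4) *
        (C ((s : ℝ) - (r : ℝ) - 1) *
            (charP G + charP (del G u) + charP (del G v) + charP (del2 G u v)) +
          (X + 1) * (charP (del G v) - charP (del G u))) := by
  obtain ⟨n, rfl⟩ : ∃ n, r = n + 2 := ⟨r - 2, by omega⟩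
  obtain ⟨m, rfl⟩ : ∃ m, s = m + 2 := ⟨s - 2, by omega⟩
  have h₁ : (X + 1 : ℝ[X]) ^ 2 * charP (pcl G u v (n + 2 + 1) (m + 2 - 1)) = _ :=
    charP_pcl_succ_succ G huv (n + 2) m
  have h₂ : (X + 1 : ℝ[X]) ^ 2 * charP (pcl G u v (n + 2) (m + 2)) = _ :=
    charP_pcl_succ_succ G huv (n + 1) (m + 1)
  have hX : (X + 1 : ℝ[X]) ≠ 0 := by simpa using X_add_C_ne_zero (1 : ℝ)
  apply mul_left_cancel₀ (pow_ne_zero 2 hX)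
  rw [mul_sub, h₁, h₂, show n + 2 + (m + 2) - 4 = n + m by omega]
  simp only [map_sub, map_natCast, map_one]
  push_cast
  ring
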